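/- arXiv:0706.1482 — 12 statements merged into one kernel-verified Lean document; each statement's English description precedes it below -/
import Mathlib

section
/- Let (G,·) and (H,∘) be weak inverse property loops that are isotopic under a triple (A,B,C) of bijections. Then for all x,z ∈ G: ((z^λ·x)^ρ)B = (((zC)^{λ'}) ∘ (xA))^{ρ'} and ((x·z^ρ)^λ)A = ((xB) ∘ ((zC)^{ρ'}))^{λ'}; in operator form, J_λR_xJ_ρB = CJ'_λR'_{xA}J'_ρ and J_ρL_xJ_λA = CJ'_ρL'_{xB}J'_λ for all x ∈ G. -/
/-- A loop: a set with binary operation, two-sided identity, and bijective translations. -/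
structure LoopStr (G : Type*) where
  mul : G → G → G
  one : G
  one_mul : ∀ a, mul one a = a
  mul_one : ∀ a, mul a one = a
  left_bij : ∀ a, Function.Bijective fun x => mul a x
  right_bij : ∀ a, Function.Bijective fun x => mul x a

/-- The weak inverse property: `x·y·z = e` implies `x·(y·z) = e`. -/
def LoopStr.WIP {G : Type*} (L : LoopStr G) : Prop :=
  ∀ x y z, L.mul (L.mul x y) z = L.one → L.mul x (L.mul y z) = L.one

namespace LoopStr

variable {G : Type*} (L : LoopStr G)

lemma left_cancel {a x y : G} (h : L.mul a x = L.mul a y) : x = y :=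
  (L.left_bij a).1 h

lemma right_cancel {a x y : G} (h : L.mul x a = L.mul y a) : x = y :=
  (L.right_bij a).1 h

/-- Converse of the weak inverse property, valid in any WIP loop. -/
lemma wip_conv (hW : L.WIP) (a b c : G) (h : L.mul a (L.mul b c) = L.one) :
    L.mul (L.mul a b) c = L.one := by
  obtain ⟨u, hu⟩ := (L.right_bij c).2 L.one
  obtain ⟨w, hw⟩ := (L.right_bij b).2 u
  have h1 : L.mul (L.mul w b) c = L.one := by
    show L.mul ((fun x => L.mul x b) w) c = L.one
    rw [hw]; exact hu
  have h2 : L.mul w (L.mul b c) = L.one := hW _ _ _ h1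
  have haw : a = w := L.right_cancel (h.trans h2.symm)
  rw [haw]; exact h1

end LoopStr

/-- If WIP loops `(G,·)` and `(H,∘)` are isotopic under `(A,B,C)`, then
`JλRxJρB = CJ'λR'_{xA}J'ρ` and `JρLxJλA = CJ'ρL'_{xB}J'λ` for all `x ∈ G`; pointwise
(maps on the right, composed left to right):
`((z^λ·x)^ρ)B = ((zC)^{λ'} ∘ xA)^{ρ'}` and `((x·z^ρ)^λ)A = (xB ∘ (zC)^{ρ'})^{λ'}`. -/
theorem stmt_1 {G H : Type*} (L : LoopStr G) (M : LoopStr H)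
    (ρ lam : G → G) (ρ' lam' : H → H)
    (hρ : ∀ x, L.mul x (ρ x) = L.one)
    (hlam : ∀ x, L.mul (lam x) x = L.one)
    (hρ' : ∀ x, M.mul x (ρ' x) = M.one)
    (hlam' : ∀ x, M.mul (lam' x) x = M.one)
    (hG : L.WIP) (hH : M.WIP)
    (A B C : G ≃ H)
    (hiso : ∀ x y, M.mul (A x) (B y) = C (L.mul x y)) :
    (∀ x z, B (ρ (L.mul (lam z) x)) = ρ' (M.mul (lam' (C z)) (A x))) ∧
    (∀ x z, A (lam (L.mul x (ρ z))) = lam' (M.mul (B x) (ρ' (C z)))) := by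
  -- ρ (lam z) = z and lam (ρ z) = z in G (pure loop facts)
  have hρlam : ∀ z : G, ρ (lam z) = z := fun z =>
    L.left_cancel ((hρ (lam z)).trans (hlam z).symm)
  have hlamρ : ∀ z : G, lam (ρ z) = z := fun z =>
    L.right_cancel ((hlam (ρ z)).trans (hρ z).symm)
  constructor
  · intro x z
    -- In G: x · ρ(lam z · x) = ρ(lam z) = z
    have h1 : L.mul (lam z) (L.mul x (ρ (L.mul (lam z) x))) = L.one :=
      hG _ _ _ (hρ (L.mul (lam z) x))
    have h2 : L.mul x (ρ (L.mul (lam z) x)) = ρ (lam z) :=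
      L.left_cancel (h1.trans (hρ (lam z)).symm)
    have h3 : L.mul x (ρ (L.mul (lam z) x)) = z := h2.trans (hρlam z)
    -- Transfer to H
    have h4 : M.mul (A x) (B (ρ (L.mul (lam z) x))) = C z := by
      rw [hiso, h3]
    have h5 : M.mul (lam' (C z)) (M.mul (A x) (B (ρ (L.mul (lam z) x)))) = M.one := by
      rw [h4]; exact hlam' (C z)
    have h6 : M.mul (M.mul (lam' (C z)) (A x)) (B (ρ (L.mul (lam z) x))) = M.one :=
      M.wip_conv hH _ _ _ h5
    exact M.left_cancel (h6.trans (hρ' (M.mul (lam' (C z)) (A x))).symm)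
  · intro x z
    -- In G: lam(x · ρ z) · x = lam (ρ z) = z
    have h1 : L.mul (L.mul (lam (L.mul x (ρ z))) x) (ρ z) = L.one :=
      L.wip_conv hG _ _ _ (hlam (L.mul x (ρ z)))
    have h2 : L.mul (lam (L.mul x (ρ z))) x = lam (ρ z) :=
      L.right_cancel (h1.trans (hlam (ρ z)).symm)
    have h3 : L.mul (lam (L.mul x (ρ z))) x = z := h2.trans (hlamρ z)
    -- Transfer to H
    have h4 : M.mul (A (lam (L.mul x (ρ z)))) (B x) = C z := by
      rw [hiso, h3]
    have h5 : M.mul (M.mul (A (lam (L.mul x (ρ z)))) (B x)) (ρ' (C z)) = M.one := by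
      rw [h4]; exact hρ' (C z)
    have h6 : M.mul (A (lam (L.mul x (ρ z)))) (M.mul (B x) (ρ' (C z))) = M.one :=
      hH _ _ _ h5
    exact M.right_cancel (h6.trans (hlam' (M.mul (B x) (ρ' (C z)))).symm)
end

section
/- Let (G,·) and (H,∘) be loops isotopic under the triple (A,B,C), and let (G,·) be a weak inverse property loop satisfying the T condition. Then (H,∘) is a weak inverse property loop, the permutations α = CA⁻¹ and β = CB⁻¹ of G are weak inverse permutations of (G,·), and J'_ρ = J'_λ if and only if J_ρ = J_λ. -/
/-- If `(G,·)` and `(H,∘)` are isotopic under `(A,B,C)` and `G` is a WIPL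
with the `𝒯` condition, then `H` is a WIPL, the permutations `α = CA⁻¹` and `β = CB⁻¹`
of `G` are weak inverse permutations of `(G,·)` (i.e. `((xα)^ρ)α = x^ρ`), and
`J'ρ = J'λ` iff `Jρ = Jλ`. -/
theorem stmt_2 {G H : Type*} (L : LoopStr G) (M : LoopStr H)
    (ρ lam : G → G) (ρ' lam' : H → H)
    (hρ : ∀ x, L.mul x (ρ x) = L.one)
    (hlam : ∀ x, L.mul (lam x) x = L.one)
    (hρ' : ∀ x, M.mul x (ρ' x) = M.one)
    (hlam' : ∀ x, M.mul (lam' x) x = M.one)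
    (A B C : G ≃ H)
    (hiso : ∀ x y, M.mul (A x) (B y) = C (L.mul x y))
    (hG : L.WIP)
    (hT1 : A = B)
    (hT23 : ((∀ h, ρ' h = B (ρ (C.symm h))) ∧ (∀ h, ρ' h = C (ρ (A.symm h)))) ∨
            ((∀ h, lam' h = A (lam (C.symm h))) ∧ (∀ h, lam' h = C (lam (B.symm h))))) :
    M.WIP ∧
    (∀ x, A.symm (C (ρ (A.symm (C x)))) = ρ x) ∧
    (∀ x, B.symm (C (ρ (B.symm (C x)))) = ρ x) ∧
    ((∀ h, ρ' h = lam' h) ↔ (∀ x, ρ x = lam x)) := by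
  subst hT1
  have Lleft : ∀ a : G, ∀ x y, L.mul a x = L.mul a y → x = y :=
    fun a _ _ hxy => (L.left_bij a).1 hxy
  have Lright : ∀ a : G, ∀ x y, L.mul x a = L.mul y a → x = y :=
    fun a _ _ hxy => (L.right_bij a).1 hxy
  have Mleft : ∀ a : H, ∀ x y, M.mul a x = M.mul a y → x = y :=
    fun a _ _ hxy => (M.left_bij a).1 hxy
  have Mright : ∀ a : H, ∀ x y, M.mul x a = M.mul y a → x = y :=
    fun a _ _ hxy => (M.right_bij a).1 hxy
  have uρ : ∀ x u, L.mul x u = L.one → u = ρ x :=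
    fun x u h => Lleft x _ _ (h.trans (hρ x).symm)
  have ulam : ∀ x u, L.mul u x = L.one → u = lam x :=
    fun x u h => Lright x _ _ (h.trans (hlam x).symm)
  have uρ' : ∀ x u, M.mul x u = M.one → u = ρ' x :=
    fun x u h => Mleft x _ _ (h.trans (hρ' x).symm)
  have ulam' : ∀ x u, M.mul u x = M.one → u = lam' x :=
    fun x u h => Mright x _ _ (h.trans (hlam' x).symm)
  have lamρ : ∀ a, lam (ρ a) = a := fun a => (ulam (ρ a) a (hρ a)).symm
  have ρlam : ∀ a, ρ (lam a) = a := fun a => (uρ (lam a) a (hlam a)).symm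
  have lamρ' : ∀ a, lam' (ρ' a) = a := fun a => (ulam' (ρ' a) a (hρ' a)).symm
  have ρlam' : ∀ a, ρ' (lam' a) = a := fun a => (uρ' (lam' a) a (hlam' a)).symm
  have ρ'inj : ∀ {a b}, ρ' a = ρ' b → a = b := fun {a b} h => by
    rw [← lamρ' a, h, lamρ' b]
  have lam'inj : ∀ {a b}, lam' a = lam' b → a = b := fun {a b} h => by
    rw [← ρlam' a, h, ρlam' b]
  have wip : ∀ x y, L.mul y (ρ (L.mul x y)) = ρ x :=
    fun x y => uρ x _ (hG x y (ρ (L.mul x y)) (hρ _))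
  obtain ⟨key1, key2⟩ : (∀ h, ρ' h = A (ρ (C.symm h))) ∧ (∀ h, ρ' h = C (ρ (A.symm h))) := by
    rcases hT23 with ⟨h1, h2⟩ | ⟨h1, h2⟩
    · exact ⟨h1, h2⟩
    · constructor
      · intro h
        apply lam'inj
        rw [lamρ', h2, Equiv.symm_apply_apply, lamρ, Equiv.apply_symm_apply]
      · intro h
        apply lam'inj
        rw [lamρ', h1, Equiv.symm_apply_apply, lamρ, Equiv.apply_symm_apply]
  have lamkey2 : ∀ h, lam' h = C (lam (A.symm h)) := fun h => by
    apply ρ'inj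
    rw [ρlam', key1, Equiv.symm_apply_apply, ρlam, Equiv.apply_symm_apply]
  refine ⟨?_, ?_, ?_, ?_⟩
  · intro u v w huvw
    obtain ⟨x, rfl⟩ : ∃ x, A x = u := ⟨A.symm u, A.apply_symm_apply u⟩
    obtain ⟨y, rfl⟩ : ∃ y, A y = v := ⟨A.symm v, A.apply_symm_apply v⟩
    rw [hiso x y] at huvw
    have hw : w = ρ' (C (L.mul x y)) := uρ' _ _ huvw
    rw [hw, key1, Equiv.symm_apply_apply, hiso y (ρ (L.mul x y)), wip x y]
    have hCx : C (ρ x) = ρ' (A x) := by rw [key2, Equiv.symm_apply_apply]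
    rw [hCx]
    exact hρ' (A x)
  · intro x
    have h := (key1 (C x)).symm.trans (key2 (C x))
    rw [Equiv.symm_apply_apply] at h
    rw [← h, Equiv.symm_apply_apply]
  · intro x
    have h := (key1 (C x)).symm.trans (key2 (C x))
    rw [Equiv.symm_apply_apply] at h
    rw [← h, Equiv.symm_apply_apply]
  · constructor
    · intro hpl x
      have h1 := hpl (A x)
      rw [key2, lamkey2, Equiv.symm_apply_apply] at h1
      exact C.injective h1
    · intro hrl h
      rw [key2, lamkey2, hrl]
end

section
/- Let (G,·) be a weak inverse property loop satisfying the T condition with respect to an isotopic loop (H,∘) under the triple (A,B,C). Then (H,∘) is a weak inverse property loop and the single permutation CA⁻¹ = CB⁻¹ is a weak inverse permutation of (G,·); in particular G has a weak inverse permutation. -/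
/-- If `(G,·)` is a WIPL with the `𝒯` condition with respect to an isotopic
loop `(H,∘)` under `(A,B,C)`, then `H` is a WIPL and the single permutation
`CA⁻¹ = CB⁻¹` of `G` is a weak inverse permutation (`((xα)^ρ)α = x^ρ`); in particular
`G` has a weak inverse permutation. -/
theorem stmt_3 {G H : Type*} (L : LoopStr G) (M : LoopStr H)
    (ρ lam : G → G) (ρ' lam' : H → H)
    (hρ : ∀ x, L.mul x (ρ x) = L.one)
    (hlam : ∀ x, L.mul (lam x) x = L.one)
    (hρ' : ∀ x, M.mul x (ρ' x) = M.one)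
    (hlam' : ∀ x, M.mul (lam' x) x = M.one)
    (A B C : G ≃ H)
    (hiso : ∀ x y, M.mul (A x) (B y) = C (L.mul x y))
    (hG : L.WIP)
    (hT1 : A = B)
    (hT23 : ((∀ h, ρ' h = B (ρ (C.symm h))) ∧ (∀ h, ρ' h = C (ρ (A.symm h)))) ∨
            ((∀ h, lam' h = A (lam (C.symm h))) ∧ (∀ h, lam' h = C (lam (B.symm h))))) :
    M.WIP ∧
    (∀ x, A.symm (C x) = B.symm (C x)) ∧
    (∀ x, A.symm (C (ρ (A.symm (C x)))) = ρ x) ∧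
    (∃ α : Equiv.Perm G, ∀ x, α (ρ (α x)) = ρ x) := by
  subst hT1
  -- uniqueness of right/left inverses in G
  have ρuniq : ∀ x y, L.mul x y = L.one → y = ρ x := by
    intro x y h
    exact (L.left_bij x).1 (show L.mul x y = L.mul x (ρ x) from h.trans (hρ x).symm)
  have lamuniq : ∀ x y, L.mul y x = L.one → y = lam x := by
    intro x y h
    exact (L.right_bij x).1 (show L.mul y x = L.mul (lam x) x from h.trans (hlam x).symm)
  have lamρ : ∀ x, lam (ρ x) = x := fun x => (lamuniq (ρ x) x (hρ x)).symm
  have ρlam : ∀ x, ρ (lam x) = x := fun x => (ρuniq (lam x) x (hlam x)).symm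
  -- uniqueness of right/left inverses in H
  have ρ'uniq : ∀ u w, M.mul u w = M.one → w = ρ' u := by
    intro u w h
    exact (M.left_bij u).1 (show M.mul u w = M.mul u (ρ' u) from h.trans (hρ' u).symm)
  have lam'uniq : ∀ u w, M.mul w u = M.one → w = lam' u := by
    intro u w h
    exact (M.right_bij u).1 (show M.mul w u = M.mul (lam' u) u from h.trans (hlam' u).symm)
  -- WIP identity in G : y · ρ(x·y) = ρ x
  have hρmul : ∀ x y, L.mul y (ρ (L.mul x y)) = ρ x := by
    intro x y
    have h1 := hG x y (ρ (L.mul x y)) (hρ _)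
    exact (L.left_bij x).1
      (show L.mul x (L.mul y (ρ (L.mul x y))) = L.mul x (ρ x) from h1.trans (hρ x).symm)
  -- decomposition of products in H
  have hiso' : ∀ u v : H, M.mul u v = C (L.mul (A.symm u) (A.symm v)) := by
    intro u v
    have := hiso (A.symm u) (A.symm v)
    simpa using this
  rcases hT23 with ⟨h2a, h2b⟩ | ⟨h3a, h3b⟩
  · -- T₂ case
    have key3 : ∀ x, A.symm (C (ρ (A.symm (C x)))) = ρ x := by
      intro x
      have e1 : ρ' (C x) = A (ρ x) := by simpa using h2a (C x)
      have e2 : ρ' (C x) = C (ρ (A.symm (C x))) := h2b (C x)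
      rw [← e2, e1, Equiv.symm_apply_apply]
    have wip : M.WIP := by
      intro u v w h
      have hw : w = ρ' (M.mul u v) := ρ'uniq _ _ h
      have hw' : w = A (ρ (L.mul (A.symm u) (A.symm v))) := by
        rw [hw, h2a, hiso', Equiv.symm_apply_apply]
      have hvw : M.mul v w = C (ρ (A.symm u)) := by
        rw [hw', hiso', Equiv.symm_apply_apply, hρmul]
      have : M.mul v w = ρ' u := by rw [hvw, ← h2b]
      rw [this]; exact hρ' u
    exact ⟨wip, fun x => rfl, key3, ⟨C.trans A.symm, key3⟩⟩
  · -- T₃ case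
    have keylam : ∀ x, A.symm (C (lam (A.symm (C x)))) = lam x := by
      intro x
      have e1 : lam' (C x) = A (lam x) := by simpa using h3a (C x)
      have e2 : lam' (C x) = C (lam (A.symm (C x))) := h3b (C x)
      rw [← e2, e1, Equiv.symm_apply_apply]
    have key3 : ∀ x, A.symm (C (ρ (A.symm (C x)))) = ρ x := by
      intro x
      have h1 := keylam (ρ (A.symm (C x)))
      rw [show C (ρ (A.symm (C x))) = C (ρ (A.symm (C x))) from rfl] at h1
      -- h1 : A.symm (C (lam (A.symm (C (ρ (A.symm (C x))))))) = lam (ρ (A.symm (C x)))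
      rw [lamρ] at h1
      -- h1 : A.symm (C (lam (A.symm (C (ρ (A.symm (C x))))))) = A.symm (C x)
      have h2 : lam (A.symm (C (ρ (A.symm (C x))))) = x := by
        have := C.injective (A.symm.injective h1)
        simpa using this
      calc A.symm (C (ρ (A.symm (C x)))) = ρ (lam (A.symm (C (ρ (A.symm (C x)))))) :=
            (ρlam _).symm
        _ = ρ x := by rw [h2]
    have wip : M.WIP := by
      intro u v w h
      have huv : M.mul u v = lam' w := lam'uniq _ _ h
      have hxy : L.mul (A.symm u) (A.symm v) = lam (A.symm w) := by
        have := huv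
        rw [hiso', h3b] at this
        exact C.injective this
      have hxyz : L.mul (L.mul (A.symm u) (A.symm v)) (A.symm w) = L.one := by
        rw [hxy]; exact hlam _
      have hassoc := hG _ _ _ hxyz
      have hu : A.symm u = lam (L.mul (A.symm v) (A.symm w)) := lamuniq _ _ hassoc
      have hvw : M.mul v w = C (L.mul (A.symm v) (A.symm w)) := hiso' v w
      have : u = lam' (M.mul v w) := by
        rw [hvw, h3a, Equiv.symm_apply_apply, ← hu, Equiv.apply_symm_apply]
      rw [this]; exact hlam' _
    exact ⟨wip, fun x => rfl, key3, ⟨C.trans A.symm, key3⟩⟩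
end

section
/- Let (G,·) be a weak inverse property loop and (G,∘) an f,g-principal isotope of (G,·). If the T condition holds (R_g = L_f, and J'_ρ = J_ρL_f = R_g⁻¹J_ρ or J'_λ = J_λR_g = L_f⁻¹J_λ), then (G,∘) is a weak inverse property loop. Conversely, if either the T₁ and T₂₁ conditions hold (R_g = L_f and J'_ρ = J_ρL_f) or the T₁ and T₂₂ conditions hold (R_g = L_f and J'_ρ = R_g⁻¹J_ρ), and (G,∘) is a weak inverse property loop, then the full T condition holds; hence in that case L_f and R_g are weak inverse permutations of (G,·). -/
/-- Let `(G,·)` be a WIPL and `(G,∘)` its `f,g`-principal isotope.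
If the `𝒯` condition holds (`Rg = Lf`, and `J'ρ = JρLf = Rg⁻¹Jρ` or
`J'λ = JλRg = Lf⁻¹Jλ`), then `(G,∘)` is a WIPL. Conversely, if the `𝒯₁` and `𝒯₂₁`
conditions (`Rg = Lf` and `J'ρ = JρLf`) or the `𝒯₁` and `𝒯₂₂` conditions
(`Rg = Lf` and `J'ρ = Rg⁻¹Jρ`) hold and `(G,∘)` is a WIPL, then the full `𝒯`
condition holds; hence in that case `Lf` and `Rg` are weak inverse permutations
of `(G,·)`. -/
theorem stmt_6 {G : Type*} (L : LoopStr G) (f g : G)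
    (circ : G → G → G)
    (hpi : ∀ x y, circ (L.mul x g) (L.mul f y) = L.mul x y)
    (ρ lam ρ' lam' : G → G)
    (hρ : ∀ x, L.mul x (ρ x) = L.one)
    (hlam : ∀ x, L.mul (lam x) x = L.one)
    (hρ' : ∀ x, circ x (ρ' x) = L.mul f g)
    (hlam' : ∀ x, circ (lam' x) x = L.mul f g)
    (hG : L.WIP) :
    -- T condition implies the isotope is a WIPL
    (((∀ x, L.mul x g = L.mul f x) ∧
      (((∀ x, ρ' x = L.mul f (ρ x)) ∧ (∀ x, ρ' (L.mul x g) = ρ x)) ∨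
       ((∀ x, lam' x = L.mul (lam x) g) ∧ (∀ x, lam' (L.mul f x) = lam x)))) →
      (∀ x y z, circ (circ x y) z = L.mul f g → circ x (circ y z) = L.mul f g)) ∧
    -- conversely, T₁ with T₂₁ or T₂₂, plus WIP of the isotope, give the full T condition
    (((((∀ x, L.mul x g = L.mul f x) ∧ (∀ x, ρ' x = L.mul f (ρ x))) ∨
       ((∀ x, L.mul x g = L.mul f x) ∧ (∀ x, ρ' (L.mul x g) = ρ x))) ∧
      (∀ x y z, circ (circ x y) z = L.mul f g → circ x (circ y z) = L.mul f g)) →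
      (((∀ x, L.mul x g = L.mul f x) ∧
        (((∀ x, ρ' x = L.mul f (ρ x)) ∧ (∀ x, ρ' (L.mul x g) = ρ x)) ∨
         ((∀ x, lam' x = L.mul (lam x) g) ∧ (∀ x, lam' (L.mul f x) = lam x)))) ∧
       (∀ x, L.mul f (ρ (L.mul f x)) = ρ x) ∧
       (∀ x, L.mul (ρ (L.mul x g)) g = ρ x))) := by

  have lf_inj : ∀ a : G, Function.Injective fun x => L.mul a x := fun a => (L.left_bij a).1
  have lf_surj : ∀ a : G, Function.Surjective fun x => L.mul a x := fun a => (L.left_bij a).2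
  have rg_inj : ∀ a : G, Function.Injective fun x => L.mul x a := fun a => (L.right_bij a).1
  have uρ : ∀ x w, L.mul x w = L.one → w = ρ x := fun x w h => lf_inj x (h.trans (hρ x).symm)
  have ulam : ∀ x w, L.mul w x = L.one → w = lam x := fun x w h => rg_inj x (h.trans (hlam x).symm)
  have wip1 : ∀ a b, L.mul b (ρ (L.mul a b)) = ρ a := fun a b =>
    uρ a _ (hG a b _ (hρ _))
  have circ' : (∀ x, L.mul x g = L.mul f x) → ∀ a b,
      circ (L.mul f a) (L.mul f b) = L.mul a b := by
    intro T1 a b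
    rw [← T1 a]; exact hpi a b
  have uρ' : ∀ (_ : ∀ x, L.mul x g = L.mul f x) u v, circ u v = L.mul f g → v = ρ' u := by
    intro T1 u v h
    obtain ⟨b, hb⟩ := lf_surj f v
    obtain ⟨a, ha⟩ := lf_surj f u
    obtain ⟨c, hc⟩ := lf_surj f (ρ' u)
    have ha' : L.mul f a = u := ha
    have hb' : L.mul f b = v := hb
    have hc' : L.mul f c = ρ' u := hc
    have h1 : L.mul a b = L.mul f g := by
      rw [← circ' T1 a b, ha', hb']; exact h
    have h2 : L.mul a c = L.mul f g := by
      rw [← circ' T1 a c, ha', hc']; exact hρ' u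
    have hbc : b = c := lf_inj a (h1.trans h2.symm)
    rw [← hb', ← hc', hbc]
  have ulam'' : ∀ (_ : ∀ x, L.mul x g = L.mul f x) u v, circ u v = L.mul f g → u = lam' v := by
    intro T1 u v h
    obtain ⟨b, hb⟩ := lf_surj f v
    obtain ⟨a, ha⟩ := lf_surj f u
    obtain ⟨c, hc⟩ := lf_surj f (lam' v)
    have ha' : L.mul f a = u := ha
    have hb' : L.mul f b = v := hb
    have hc' : L.mul f c = lam' v := hc
    have h1 : L.mul a b = L.mul f g := by
      rw [← circ' T1 a b, ha', hb']; exact h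
    have h2 : L.mul c b = L.mul f g := by
      rw [← circ' T1 c b, hc', hb']; exact hlam' v
    have hac : a = c := rg_inj b (h1.trans h2.symm)
    rw [← ha', ← hc', hac]
  constructor
  · rintro ⟨T1, hT⟩ x y z hxyz
    obtain ⟨a, ha⟩ := lf_surj f x
    obtain ⟨b, hb⟩ := lf_surj f y
    obtain ⟨c, hc⟩ := lf_surj f z
    have ha' : L.mul f a = x := ha
    have hb' : L.mul f b = y := hb
    have hc' : L.mul f c = z := hc
    have hxy : circ x y = L.mul a b := by rw [← ha', ← hb']; exact circ' T1 a b
    rw [hxy] at hxyz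
    rcases hT with ⟨T21, T22⟩ | ⟨T31, T32⟩
    · -- T₂ case
      have hz : z = ρ' (L.mul a b) := uρ' T1 _ _ hxyz
      have hc2 : c = ρ (L.mul a b) := by
        apply lf_inj f
        show L.mul f c = L.mul f (ρ (L.mul a b))
        rw [hc', hz, T21]
      have habc : L.mul (L.mul a b) c = L.one := by rw [hc2]; exact hρ _
      have hyz : circ y z = ρ a := by
        rw [← hb', ← hc', circ' T1 b c]
        exact uρ a _ (hG a b c habc)
      have hx : ρ' x = ρ a := by
        rw [← ha']
        have := T22 a
        rwa [T1 a] at this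
      rw [hyz, ← hx]
      exact hρ' x
    · -- T₃ case
      have hu : L.mul a b = lam' z := ulam'' T1 _ _ hxyz
      have hu' : L.mul a b = lam c := by rw [hu, ← hc']; exact T32 c
      have habc : L.mul (L.mul a b) c = L.one := by rw [hu']; exact hlam c
      have halam : a = lam (L.mul b c) := ulam _ _ (hG a b c habc)
      have hyz : circ y z = L.mul b c := by rw [← hb', ← hc']; exact circ' T1 b c
      have hx : x = lam' (L.mul b c) := by
        rw [← ha', halam]
        rw [T31 (L.mul b c), T1 (lam (L.mul b c))]
      rw [hyz, hx]
      exact hlam' _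
  · rintro ⟨hT, hcw⟩
    have T1 : ∀ x, L.mul x g = L.mul f x := hT.elim And.left And.left
    have cwip : ∀ u v, circ v (ρ' (circ u v)) = ρ' u := by
      intro u v
      exact uρ' T1 u _ (hcw u v _ (hρ' (circ u v)))
    -- prove T21 and T22' (the `f`-form of T22) in both cases
    have key : (∀ x, ρ' x = L.mul f (ρ x)) ∧ (∀ x, ρ' (L.mul f x) = ρ x) := by
      rcases hT with ⟨_, T21⟩ | ⟨_, T22⟩
      · refine ⟨T21, fun a => ?_⟩
        have h := cwip (L.mul f a) (L.mul f L.one)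
        rw [circ' T1 a L.one, L.mul_one a, T21 a, circ' T1 L.one (ρ a), L.one_mul] at h
        exact h.symm
      · have T22' : ∀ x, ρ' (L.mul f x) = ρ x := by
          intro x; rw [← T1 x]; exact T22 x
        have S1 : ∀ t, L.mul f (ρ (L.mul f t)) = ρ t := by
          intro t
          obtain ⟨s, hs⟩ := lf_surj f (ρ t)
          have hs' : L.mul f s = ρ t := hs
          have h := cwip (L.mul f f) (L.mul f t)
          rw [circ' T1 f t, T22' t, T22' f, ← hs', circ' T1 t s] at h
          have hts : L.mul t s = L.mul t (ρ (L.mul f t)) := h.trans (wip1 f t).symm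
          have : s = ρ (L.mul f t) := lf_inj t hts
          rw [← hs', this]
        refine ⟨fun x => ?_, T22'⟩
        obtain ⟨t, ht⟩ := lf_surj f x
        have ht' : L.mul f t = x := ht
        rw [← ht', T22' t, S1 t]
    obtain ⟨T21, T22'⟩ := key
    have T22 : ∀ x, ρ' (L.mul x g) = ρ x := fun x => by rw [T1 x]; exact T22' x
    have S1 : ∀ x, L.mul f (ρ (L.mul f x)) = ρ x := fun x => (T21 _).symm.trans (T22' x)
    refine ⟨⟨T1, Or.inl ⟨T21, T22⟩⟩, S1, fun x => ?_⟩
    rw [T1 x, T1 (ρ (L.mul f x))]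
    exact S1 x
end

section
/- Let (G,·) be a weak inverse property loop and suppose its f,g-principal isotope (G,∘) is also a weak inverse property loop. Then for all x,z ∈ G: f·((z^λ·x)^ρ) = ((z^{λ'}) ∘ (x·g))^{ρ'} and ((x·z^ρ)^λ)·g = ((f·x) ∘ (z^{ρ'}))^{λ'}; in operator form, J_λR_xJ_ρL_f = J'_λR'_{x·g}J'_ρ and J_ρL_xJ_λR_g = J'_ρL'_{f·x}J'_λ for all x ∈ G. -/
/-- Let `(G,·)` be a WIPL whose `f,g`-principal isotope `(G,∘)` is also a
WIPL. Then for all `x z ∈ G`: `f·((z^λ·x)^ρ) = (z^{λ'} ∘ (x·g))^{ρ'}` and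
`((x·z^ρ)^λ)·g = ((f·x) ∘ z^{ρ'})^{λ'}`; in operator form `JλRxJρLf = J'λR'_{x·g}J'ρ`
and `JρLxJλRg = J'ρL'_{f·x}J'λ`. -/
theorem stmt_7 {G : Type*} (L : LoopStr G) (f g : G)
    (circ : G → G → G)
    (hpi : ∀ x y, circ (L.mul x g) (L.mul f y) = L.mul x y)
    (ρ lam ρ' lam' : G → G)
    (hρ : ∀ x, L.mul x (ρ x) = L.one)
    (hlam : ∀ x, L.mul (lam x) x = L.one)
    (hρ' : ∀ x, circ x (ρ' x) = L.mul f g)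
    (hlam' : ∀ x, circ (lam' x) x = L.mul f g)
    (hG : L.WIP)
    (hH : ∀ x y z, circ (circ x y) z = L.mul f g → circ x (circ y z) = L.mul f g) :
    (∀ x z, L.mul f (ρ (L.mul (lam z) x)) = ρ' (circ (lam' z) (L.mul x g))) ∧
    (∀ x z, L.mul (lam (L.mul x (ρ z))) g = lam' (circ (L.mul f x) (ρ' z))) := by
  have hLinj : ∀ a : G, Function.Injective (fun x => L.mul a x) := fun a => (L.left_bij a).1
  have hRinj : ∀ a : G, Function.Injective (fun x => L.mul x a) := fun a => (L.right_bij a).1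
  have hLsurj : ∀ a b : G, ∃ c, L.mul a c = b := fun a b => (L.left_bij a).2 b
  have hRsurj : ∀ a b : G, ∃ c, L.mul c a = b := fun a b => (L.right_bij a).2 b
  -- injectivity of circ translations
  have hcLinj : ∀ a y₁ y₂ : G, circ a y₁ = circ a y₂ → y₁ = y₂ := by
    intro a y₁ y₂ h
    obtain ⟨u, hu⟩ := hRsurj g a
    obtain ⟨v₁, hv₁⟩ := hLsurj f y₁
    obtain ⟨v₂, hv₂⟩ := hLsurj f y₂
    rw [← hu, ← hv₁, ← hv₂, hpi, hpi] at h
    rw [← hv₁, ← hv₂, hLinj u h]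
  have hcRinj : ∀ b y₁ y₂ : G, circ y₁ b = circ y₂ b → y₁ = y₂ := by
    intro b y₁ y₂ h
    obtain ⟨v, hv⟩ := hLsurj f b
    obtain ⟨u₁, hu₁⟩ := hRsurj g y₁
    obtain ⟨u₂, hu₂⟩ := hRsurj g y₂
    rw [← hv, ← hu₁, ← hu₂, hpi, hpi] at h
    rw [← hu₁, ← hu₂, hRinj v h]
  -- converse WIP in G
  have hG' : ∀ a b c, L.mul a (L.mul b c) = L.one → L.mul (L.mul a b) c = L.one := by
    intro a b c h
    have h1 := hρ (L.mul a b)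
    have h2 := hG a b _ h1
    have h3 : L.mul b (ρ (L.mul a b)) = L.mul b c := hLinj a (h2.trans h.symm)
    have h4 : ρ (L.mul a b) = c := hLinj b h3
    rw [← h4]; exact h1
  constructor
  · intro x z
    have h1 := hρ' (circ (lam' z) (L.mul x g))
    have h2 := hH (lam' z) (L.mul x g) _ h1
    obtain ⟨s, hs⟩ := hLsurj f (ρ' (circ (lam' z) (L.mul x g)))
    rw [← hs, hpi] at h2
    have hxs : L.mul x s = z := hcLinj (lam' z) _ _ (h2.trans (hlam' z).symm)
    have h3 := hG (lam z) x (ρ (L.mul (lam z) x)) (hρ _)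
    have h4 : L.mul x (ρ (L.mul (lam z) x)) = z := hLinj (lam z) (h3.trans (hlam z).symm)
    have h5 : s = ρ (L.mul (lam z) x) := hLinj x (hxs.trans h4.symm)
    rw [← h5, hs]
  · intro x z
    have h1 : L.mul (lam (L.mul x (ρ z))) (L.mul x (ρ z)) = L.one := hlam _
    have h2 : L.mul (L.mul (lam (L.mul x (ρ z))) x) (ρ z) = L.one := hG' _ _ _ h1
    have h3 : L.mul (lam (L.mul x (ρ z))) x = z := hRinj (ρ z) (h2.trans (hρ z).symm)
    have h4 : circ (circ (L.mul (lam (L.mul x (ρ z))) g) (L.mul f x)) (ρ' z) = L.mul f g := by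
      rw [hpi, h3]; exact hρ' z
    have h5 := hH _ _ _ h4
    exact (hcRinj _ _ _ ((hlam' (circ (L.mul f x) (ρ' z))).trans h5.symm)).symm
end

section
/- Let G be a weak inverse property loop, and let (G,∘') and (G,∘'') be an f',g'-principal isotope and an f'',g''-principal isotope of G, each satisfying the T₂ condition (so that L_{f'} = J_λJ'_ρ, R_{g'} = J_ρJ'_λ and L_{f''} = J_λJ''_ρ, R_{g''} = J_ρJ''_λ). If the two isotopes have the same right inverse mapping (J'_ρ = J''_ρ) or the same left inverse mapping (J'_λ = J''_λ), then f' = f'' and g' = g'', so the two principal isotopes coincide. -/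
/-- Auxiliary: in an `f,g`-principal isotope, the right and left inverse maps are
mutually inverse bijections. -/
lemma iso_inv_aux {G : Type*} (L : LoopStr G) (f g : G) (circ : G → G → G)
    (hpi : ∀ x y, circ (L.mul x g) (L.mul f y) = L.mul x y)
    (ρ' lam' : G → G)
    (hρ' : ∀ x, circ x (ρ' x) = L.mul f g)
    (hlam' : ∀ x, circ (lam' x) x = L.mul f g) :
    (∀ x, lam' (ρ' x) = x) ∧ (∀ x, ρ' (lam' x) = x) := by
  -- right-injectivity of circ (in the first argument)
  have hrinj : ∀ a b c, circ a c = circ b c → a = b := by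
    intro a b c h
    obtain ⟨x, hx⟩ := (L.right_bij g).2 a
    obtain ⟨y, hy⟩ := (L.right_bij g).2 b
    obtain ⟨z, hz⟩ := (L.left_bij f).2 c
    simp only at hx hy hz
    rw [← hx, ← hy, ← hz, hpi, hpi] at h
    rw [← hx, ← hy, (L.right_bij z).1 h]
  -- left-injectivity of circ (in the second argument)
  have hlinj : ∀ a b c, circ c a = circ c b → a = b := by
    intro a b c h
    obtain ⟨x, hx⟩ := (L.left_bij f).2 a
    obtain ⟨y, hy⟩ := (L.left_bij f).2 b
    obtain ⟨z, hz⟩ := (L.right_bij g).2 c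
    simp only at hx hy hz
    rw [← hx, ← hy, ← hz, hpi, hpi] at h
    rw [← hx, ← hy, (L.left_bij z).1 h]
  constructor
  · intro x
    exact hrinj _ _ _ ((hlam' (ρ' x)).trans (hρ' x).symm)
  · intro x
    exact hlinj _ _ _ ((hρ' (lam' x)).trans (hlam' x).symm)

/-- Let `G` be a WIPL, and let `(G,∘')` and `(G,∘'')` be an
`f',g'`-principal isotope and an `f'',g''`-principal isotope of `G`, each satisfying the
`𝒯₂` condition, so that `L_{f'} = JλJ'ρ`, `R_{g'} = JρJ'λ` and `L_{f''} = JλJ''ρ`,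
`R_{g''} = JρJ''λ` (pointwise: `f'·x = (x^λ)^{ρ'}`, `x·g' = (x^ρ)^{λ'}`, etc.).
If the two isotopes have the same right inverse mapping (`J'ρ = J''ρ`) or the same left
inverse mapping (`J'λ = J''λ`), then `f' = f''` and `g' = g''`, so the two principal
isotopes coincide. -/
theorem stmt_9 {G : Type*} (L : LoopStr G)
    (f₁ g₁ f₂ g₂ : G)
    (circ₁ circ₂ : G → G → G)
    (hpi₁ : ∀ x y, circ₁ (L.mul x g₁) (L.mul f₁ y) = L.mul x y)
    (hpi₂ : ∀ x y, circ₂ (L.mul x g₂) (L.mul f₂ y) = L.mul x y)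
    (ρ lam ρ₁ lam₁ ρ₂ lam₂ : G → G)
    (hρ : ∀ x, L.mul x (ρ x) = L.one)
    (hlam : ∀ x, L.mul (lam x) x = L.one)
    (hρ₁ : ∀ x, circ₁ x (ρ₁ x) = L.mul f₁ g₁)
    (hlam₁ : ∀ x, circ₁ (lam₁ x) x = L.mul f₁ g₁)
    (hρ₂ : ∀ x, circ₂ x (ρ₂ x) = L.mul f₂ g₂)
    (hlam₂ : ∀ x, circ₂ (lam₂ x) x = L.mul f₂ g₂)
    (hG : L.WIP)
    (hLf₁ : ∀ x, L.mul f₁ x = ρ₁ (lam x))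
    (hRg₁ : ∀ x, L.mul x g₁ = lam₁ (ρ x))
    (hLf₂ : ∀ x, L.mul f₂ x = ρ₂ (lam x))
    (hRg₂ : ∀ x, L.mul x g₂ = lam₂ (ρ x))
    (hsame : (∀ x, ρ₁ x = ρ₂ x) ∨ (∀ x, lam₁ x = lam₂ x)) :
    f₁ = f₂ ∧ g₁ = g₂ ∧ circ₁ = circ₂ := by
  obtain ⟨h1l, h1r⟩ := iso_inv_aux L f₁ g₁ circ₁ hpi₁ ρ₁ lam₁ hρ₁ hlam₁
  obtain ⟨h2l, h2r⟩ := iso_inv_aux L f₂ g₂ circ₂ hpi₂ ρ₂ lam₂ hρ₂ hlam₂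
  -- from either hypothesis, both inverse maps agree
  have hboth : (∀ x, ρ₁ x = ρ₂ x) ∧ (∀ x, lam₁ x = lam₂ x) := by
    rcases hsame with h | h
    · refine ⟨h, fun x => ?_⟩
      have : ρ₂ (lam₁ x) = x := by rw [← h, h1r]
      calc lam₁ x = lam₂ (ρ₂ (lam₁ x)) := (h2l _).symm
        _ = lam₂ x := by rw [this]
    · refine ⟨fun x => ?_, h⟩
      have : lam₂ (ρ₁ x) = x := by rw [← h, h1l]
      calc ρ₁ x = ρ₂ (lam₂ (ρ₁ x)) := (h2r _).symm
        _ = ρ₂ x := by rw [this]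
  obtain ⟨hρeq, hlameq⟩ := hboth
  have hf : f₁ = f₂ := by
    have := hLf₁ L.one
    rw [L.mul_one, hρeq] at this
    rw [this, ← hLf₂, L.mul_one]
  have hg : g₁ = g₂ := by
    have := hRg₁ L.one
    rw [L.one_mul, hlameq] at this
    rw [this, ← hRg₂, L.one_mul]
  refine ⟨hf, hg, ?_⟩
  funext u v
  obtain ⟨x, hx⟩ := (L.right_bij g₁).2 u
  obtain ⟨y, hy⟩ := (L.left_bij f₁).2 v
  simp only at hx hy
  rw [← hx, ← hy, hpi₁, ← hpi₂ x y, ← hf, ← hg]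
end

section
/- Let (G,·) be a weak inverse property loop satisfying the T condition with respect to an f,g-principal isotope (G,∘) (or, more generally, let (G,·) be a WIPL satisfying the T₁ and T₂₁ conditions or the T₁ and T₂₂ conditions whose f,g-principal isotope is also a WIPL). Then: (a) x·g = f·x for all x ∈ G, and f,g lie in the centrum C(G); (b) x^{ρ'} = f·(x^ρ) for all x; (c) x^{λ'} = (x^λ)·g for all x; (d) g·g = f·f = f·g = g·f; (e) f^{ρ'} = g^{λ'} = e. -/
/-- Let `(G,·)` be a WIPL satisfying the `𝒯` condition with respect to an
`f,g`-principal isotope `(G,∘)` (or, more generally, a WIPL satisfying the `𝒯₁` and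
`𝒯₂₁` conditions or the `𝒯₁` and `𝒯₂₂` conditions whose `f,g`-principal isotope is
also a WIPL). Then: (a) `x·g = f·x` for all `x`, and `f, g` lie in the centrum `C(G)`;
(b) `x^{ρ'} = f·x^ρ`; (c) `x^{λ'} = x^λ·g`; (d) `g·g = f·f = f·g = g·f`;
(e) `f^{ρ'} = g^{λ'} = e`. -/
theorem stmt_10 {G : Type*} (L : LoopStr G) (f g : G)
    (circ : G → G → G)
    (hpi : ∀ x y, circ (L.mul x g) (L.mul f y) = L.mul x y)
    (ρ lam ρ' lam' : G → G)
    (hρ : ∀ x, L.mul x (ρ x) = L.one)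
    (hlam : ∀ x, L.mul (lam x) x = L.one)
    (hρ' : ∀ x, circ x (ρ' x) = L.mul f g)
    (hlam' : ∀ x, circ (lam' x) x = L.mul f g)
    (hG : L.WIP)
    (hyp :
      -- either the T condition holds
      ((∀ x, L.mul x g = L.mul f x) ∧
       (((∀ x, ρ' x = L.mul f (ρ x)) ∧ (∀ x, ρ' (L.mul x g) = ρ x)) ∨
        ((∀ x, lam' x = L.mul (lam x) g) ∧ (∀ x, lam' (L.mul f x) = lam x)))) ∨
      -- or T₁ with T₂₁ or T₂₂ holds and the isotope is a WIPL
      ((((∀ x, L.mul x g = L.mul f x) ∧ (∀ x, ρ' x = L.mul f (ρ x))) ∨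
        ((∀ x, L.mul x g = L.mul f x) ∧ (∀ x, ρ' (L.mul x g) = ρ x))) ∧
       (∀ x y z, circ (circ x y) z = L.mul f g → circ x (circ y z) = L.mul f g))) :
    -- (a)
    ((∀ x, L.mul x g = L.mul f x) ∧
     (∀ x, L.mul f x = L.mul x f) ∧ (∀ x, L.mul g x = L.mul x g)) ∧
    -- (b)
    (∀ x, ρ' x = L.mul f (ρ x)) ∧
    -- (c)
    (∀ x, lam' x = L.mul (lam x) g) ∧
    -- (d)
    (L.mul g g = L.mul f f ∧ L.mul f f = L.mul f g ∧ L.mul f g = L.mul g f) ∧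
    -- (e)
    (ρ' f = L.one ∧ lam' g = L.one) := by
  -- T₁ holds in every branch
  have hT1 : ∀ x, L.mul x g = L.mul f x := by
    rcases hyp with ⟨h, _⟩ | ⟨⟨h, _⟩ | ⟨h, _⟩, _⟩ <;> exact h
  have hfg : f = g := by
    have h := hT1 L.one
    rw [L.one_mul, L.mul_one] at h
    exact h.symm
  subst hfg
  -- basic loop facts
  have lcan : ∀ a {x y : G}, L.mul a x = L.mul a y → x = y :=
    fun a _ _ h => (L.left_bij a).1 h
  have rcan : ∀ a {x y : G}, L.mul x a = L.mul y a → x = y :=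
    fun a _ _ h => (L.right_bij a).1 h
  have lsurj : ∀ a y : G, ∃ x, L.mul a x = y := fun a y => (L.left_bij a).2 y
  have rsurj : ∀ a y : G, ∃ x, L.mul x a = y := fun a y => (L.right_bij a).2 y
  have uρ : ∀ {x y : G}, L.mul x y = L.one → y = ρ x :=
    fun {x y} h => lcan x (h.trans (hρ x).symm)
  have ulam : ∀ {x y : G}, L.mul y x = L.one → y = lam x :=
    fun {x y} h => rcan x (h.trans (hlam x).symm)
  -- converse of WIP
  have hG' : ∀ x y z, L.mul x (L.mul y z) = L.one → L.mul (L.mul x y) z = L.one := by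
    intro x y z h
    have h1 := hG x y (ρ (L.mul x y)) (hρ _)
    have hz : z = ρ (L.mul x y) := lcan y (lcan x (h.trans h1.symm))
    rw [hz]; exact hρ _
  -- W_ρ : y · ρ(x·y) = ρ x
  have Wρ : ∀ x y, L.mul y (ρ (L.mul x y)) = ρ x := by
    intro x y
    exact uρ (hG x y (ρ (L.mul x y)) (hρ _))
  -- injectivity of circ in each argument
  have cinj2 : ∀ x {u v : G}, circ x u = circ x v → u = v := by
    intro x u v h
    obtain ⟨a, rfl⟩ := rsurj f x
    obtain ⟨b1, rfl⟩ := lsurj f u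
    obtain ⟨b2, rfl⟩ := lsurj f v
    rw [hpi, hpi] at h
    rw [lcan a h]
  have cinj1 : ∀ x {u v : G}, circ u x = circ v x → u = v := by
    intro x u v h
    obtain ⟨b, rfl⟩ := lsurj f x
    obtain ⟨a1, rfl⟩ := rsurj f u
    obtain ⟨a2, rfl⟩ := rsurj f v
    rw [hpi, hpi] at h
    rw [rcan b h]
  -- the key identity (B): a · ρ(a·f) = f·f
  have hB : ∀ a, L.mul a (ρ (L.mul a f)) = L.mul f f := by
    have fromb : (∀ x, ρ' x = L.mul f (ρ x)) →
        ∀ a, L.mul a (ρ (L.mul a f)) = L.mul f f := by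
      intro hb0 a
      have h := hρ' (L.mul a f)
      rw [hb0, hpi] at h
      exact h
    have from22 : (∀ x, ρ' (L.mul x f) = ρ x) →
        ∀ a, L.mul a (ρ (L.mul a f)) = L.mul f f := by
      intro h22 a
      have h := hρ' (L.mul a f)
      rw [h22 a, ← Wρ a f, hpi] at h
      exact h
    rcases hyp with ⟨_, ⟨hb0, _⟩ | ⟨hc0, _⟩⟩ | ⟨⟨_, hb0⟩ | ⟨_, h22⟩, _⟩
    · exact fromb hb0
    · -- from T₃: first get (C), then (B)
      intro a
      have hab : L.mul a (L.mul f (ρ (L.mul a f))) = L.one :=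
        hG a f (ρ (L.mul a f)) (hρ _)
      have hla : a = lam (L.mul f (ρ (L.mul a f))) := ulam hab
      have h := hlam' (L.mul f (ρ (L.mul a f)))
      rw [hc0, hpi, ← hla] at h
      exact h
    · exact fromb hb0
    · exact from22 h22
  -- the key identity (C): lam(f·b) · b = f·f
  have hC : ∀ b, L.mul (lam (L.mul f b)) b = L.mul f f := by
    intro b
    have ha : L.mul (lam (L.mul f b)) (L.mul f b) = L.one := hlam _
    have h2 : L.mul (L.mul (lam (L.mul f b)) f) b = L.one := hG' _ _ _ ha
    have hb2 : b = ρ (L.mul (lam (L.mul f b)) f) := uρ h2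
    have h := hB (lam (L.mul f b))
    rw [← hb2] at h
    exact h
  -- (b)
  have hb : ∀ x, ρ' x = L.mul f (ρ x) := by
    intro x
    obtain ⟨a, rfl⟩ := rsurj f x
    apply cinj2 (L.mul a f)
    rw [hρ', hpi]
    exact (hB a).symm
  -- (c)
  have hc : ∀ x, lam' x = L.mul (lam x) f := by
    intro x
    obtain ⟨b, rfl⟩ := lsurj f x
    apply cinj1 (L.mul f b)
    rw [hlam', hpi]
    exact (hC b).symm
  refine ⟨⟨hT1, fun x => (hT1 x).symm, fun x => (hT1 x).symm⟩, hb, hc, ⟨rfl, rfl, rfl⟩, ?_, ?_⟩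
  · rw [hb f]; exact hρ f
  · rw [hc f]; exact hlam f
end

section
/- Let G be a cross inverse property loop satisfying the T condition with respect to an f,g-principal isotope, and suppose this f,g-principal isotope is an automorphic inverse property loop. Then f and g are: (1) alternative elements, i.e. (x·x)·y = x·(x·y) and y·(x·x) = (y·x)·x for all y ∈ G and x ∈ {f,g}; (2) flexible elements, i.e. x·(y·x) = (x·y)·x for all y ∈ G and x ∈ {f,g}; (3) centrum elements, i.e. x·y = y·x for all y ∈ G and x ∈ {f,g}; and (4) equal, i.e. f = g. -/
/-- Let `G` be a CIP loop (`(x·y)·x^ρ = y`) satisfying the `𝒯` condition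
with respect to an `f,g`-principal isotope, and suppose this isotope is an automorphic
inverse property loop (`(x∘y)^{ρ'} = x^{ρ'} ∘ y^{ρ'}`). Then `f` and `g` are
(1) alternative, (2) flexible, (3) centrum elements, and (4) `f = g`. -/
theorem stmt_11 {G : Type*} (L : LoopStr G) (f g : G)
    (circ : G → G → G)
    (hpi : ∀ x y, circ (L.mul x g) (L.mul f y) = L.mul x y)
    (ρ lam ρ' lam' : G → G)
    (hρ : ∀ x, L.mul x (ρ x) = L.one)
    (hlam : ∀ x, L.mul (lam x) x = L.one)
    (hρ' : ∀ x, circ x (ρ' x) = L.mul f g)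
    (hlam' : ∀ x, circ (lam' x) x = L.mul f g)
    (hCIP : ∀ x y, L.mul (L.mul x y) (ρ x) = y)
    (hT1 : ∀ x, L.mul x g = L.mul f x)
    (hT23 : ((∀ x, ρ' x = L.mul f (ρ x)) ∧ (∀ x, ρ' (L.mul x g) = ρ x)) ∨
            ((∀ x, lam' x = L.mul (lam x) g) ∧ (∀ x, lam' (L.mul f x) = lam x)))
    (hAIP : ∀ x y, ρ' (circ x y) = circ (ρ' x) (ρ' y)) :
    -- (1) alternative elements
    (∀ y, ∀ x ∈ ({f, g} : Set G),
      L.mul (L.mul x x) y = L.mul x (L.mul x y) ∧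
      L.mul y (L.mul x x) = L.mul (L.mul y x) x) ∧
    -- (2) flexible elements
    (∀ y, ∀ x ∈ ({f, g} : Set G), L.mul x (L.mul y x) = L.mul (L.mul x y) x) ∧
    -- (3) centrum elements
    (∀ y, ∀ x ∈ ({f, g} : Set G), L.mul x y = L.mul y x) ∧
    -- (4) equal
    f = g := by
  have lc : ∀ (a : G) {x y : G}, L.mul a x = L.mul a y → x = y :=
    fun a _ _ h => (L.left_bij a).1 h
  have rc : ∀ (a : G) {x y : G}, L.mul x a = L.mul y a → x = y :=
    fun a _ _ h => (L.right_bij a).1 h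
  have ls : ∀ (a b : G), ∃ x, L.mul a x = b := fun a b => (L.left_bij a).2 b
  have rs : ∀ (a b : G), ∃ x, L.mul x a = b := fun a b => (L.right_bij a).2 b
  have hfg : f = g := by
    have := hT1 L.one
    rw [L.one_mul, L.mul_one] at this
    exact this.symm
  subst hfg
  -- now everything is in terms of f; hT1 : ∀ x, x·f = f·x
  have hρlam : ∀ c, ρ (lam c) = c := fun c => lc (lam c) (by rw [hρ, hlam])
  have hlamρ : ∀ c, lam (ρ c) = c := fun c => rc (ρ c) (by rw [hlam, hρ])
  have hxw : ∀ x w, L.mul x (L.mul w (ρ x)) = w := by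
    intro x w
    obtain ⟨y, hy⟩ := ls x w
    rw [← hy, hCIP]
  -- key facts to establish in both cases
  have key : (∀ y, L.mul (L.mul f f) y = L.mul f (L.mul f y)) ∧
             (∀ y, L.mul y (L.mul f f) = L.mul f (L.mul f y)) := by
    rcases hT23 with ⟨h1, h2⟩ | ⟨h1, h2⟩
    · -- T2 case
      have hE1 : ∀ x, ρ x = L.mul f (ρ (L.mul x f)) := fun x => (h2 x).symm.trans (h1 _)
      have hstar : ∀ a b,
          L.mul f (ρ (L.mul a b)) = L.mul (ρ (L.mul a f)) (ρ (L.mul b f)) := by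
        intro a b
        have e1 : ρ' (L.mul a b) = circ (ρ' (L.mul a f)) (ρ' (L.mul f b)) := by
          rw [← hpi a b]; exact hAIP _ _
        rw [h1 (L.mul a b), h2 a, ← hT1 b, h2 b] at e1
        -- e1 : f·ρ(ab) = circ (ρ a) (ρ b)
        have e2 : ρ a = L.mul (ρ (L.mul a f)) f :=
          (hE1 a).trans (hT1 (ρ (L.mul a f))).symm
        have e3 : ρ b = L.mul f (ρ (L.mul b f)) := hE1 b
        rw [e2, e3, hpi] at e1
        exact e1
      have hApre : ∀ c, L.mul f (L.mul f c) = L.mul c (ρ f) := by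
        intro c
        obtain ⟨a, ha⟩ := rs f (lam c)
        have hac : ρ (L.mul a f) = c := by rw [ha, hρlam]
        have := hstar a L.one
        rw [L.mul_one, L.one_mul, hac] at this
        -- this : f·ρ a = c·ρ f
        rw [hE1 a, hac] at this
        exact this
      have hρf : ρ f = L.mul f f := by
        have := hApre L.one
        rw [L.mul_one, L.one_mul] at this
        exact this.symm
      have hA : ∀ c, L.mul f (L.mul f c) = L.mul c (L.mul f f) := by
        intro c; rw [← hρf]; exact hApre c
      have hρff : ρ (L.mul f f) = f := by
        have := hE1 f
        rw [hρf] at this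
        exact (lc f this).symm
      have hL3 : ∀ y, L.mul f (L.mul f (L.mul f y)) = y := by
        intro y
        rw [hA (L.mul f y), ← hρf, hCIP]
      constructor
      · intro y
        apply rc f
        have r1 : L.mul (L.mul (L.mul f f) y) f = y := by
          have := hCIP (L.mul f f) y
          rwa [hρff] at this
        have r2 : L.mul (L.mul f (L.mul f y)) f = y := by
          rw [hT1, hL3]
        rw [r1, r2]
      · exact fun y => (hA y).symm
    · -- T3 case
      have ccr : ∀ {u v : G} (w : G), circ u w = circ v w → u = v := by
        intro u v w h
        obtain ⟨x, hx⟩ := rs f u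
        obtain ⟨x', hx'⟩ := rs f v
        obtain ⟨y, hy⟩ := ls f w
        rw [← hx, ← hx', ← hy, hpi, hpi] at h
        rw [← hx, ← hx', rc y h]
      have ccl : ∀ (u : G) {w w' : G}, circ u w = circ u w' → w = w' := by
        intro u w w' h
        obtain ⟨x, hx⟩ := rs f u
        obtain ⟨y, hy⟩ := ls f w
        obtain ⟨y', hy'⟩ := ls f w'
        rw [← hx, ← hy, ← hy', hpi, hpi] at h
        rw [← hy, ← hy', lc x h]
      have hlρ' : ∀ x, lam' (ρ' x) = x := fun x => ccr (ρ' x) (by rw [hlam', hρ'])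
      have hρl' : ∀ x, ρ' (lam' x) = x := fun x => ccl (lam' x) (by rw [hρ', hlam'])
      have hAIPl : ∀ a b, lam' (circ a b) = circ (lam' a) (lam' b) := by
        intro a b
        have h := hAIP (lam' a) (lam' b)
        rw [hρl', hρl'] at h
        rw [← h, hlρ']
      have hE1 : ∀ x, lam x = L.mul f (lam (L.mul f x)) := by
        intro x
        rw [← h2 x, h1, hT1]
      have hstar : ∀ a b,
          L.mul (lam (L.mul a b)) f = L.mul (lam (L.mul a f)) (lam (L.mul f b)) := by
        intro a b
        have e1 : lam' (L.mul a b) = circ (lam' (L.mul a f)) (lam' (L.mul f b)) := by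
          rw [← hpi a b]; exact hAIPl _ _
        rw [h1 (L.mul a b), h1 (L.mul a f), h2 b] at e1
        -- e1 : lam(ab)·f = circ (lam(af)·f) (lam b)
        rw [hE1 b, hpi] at e1
        exact e1
      have hBpre : ∀ c, L.mul (L.mul f c) f = L.mul (lam f) c := by
        intro c
        obtain ⟨b, hb⟩ := ls f (ρ c)
        have hbc : lam (L.mul f b) = c := by rw [hb, hlamρ]
        have := hstar L.one b
        rw [L.one_mul, L.one_mul, hbc] at this
        -- this : lam b·f = lam f·c
        rw [hE1 b, hbc] at this
        exact this
      have hlamf : lam f = L.mul f f := by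
        have := hBpre L.one
        rw [L.mul_one, L.mul_one] at this
        exact this.symm
      have hK1 : ∀ c, L.mul (L.mul f f) c = L.mul f (L.mul f c) := by
        intro c
        rw [← hlamf, ← hBpre c, hT1]
      have hρff : ρ (L.mul f f) = f := by rw [← hlamf, hρlam]
      have hρf : ρ f = L.mul f f := by
        apply lc f
        rw [hρ, ← hT1 (L.mul f f), ← hlamf, hlam]
      have hL3 : ∀ y, L.mul f (L.mul f (L.mul f y)) = y := by
        intro y
        rw [← hK1 (L.mul f y), ← hT1 y]
        have := hxw (L.mul f f) y
        rwa [hρff] at this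
      constructor
      · exact hK1
      · intro y
        apply lc f
        rw [hL3]
        have := hxw f y
        rwa [hρf] at this
  obtain ⟨K1, K2⟩ := key
  have memf : ∀ x ∈ ({f, f} : Set G), x = f := by
    intro x hx
    rcases hx with h | h <;> exact h
  refine ⟨?_, ?_, ?_, rfl⟩
  · intro y x hx
    rw [memf x hx]
    refine ⟨K1 y, ?_⟩
    rw [hT1 y, hT1 (L.mul f y)]
    exact K2 y
  · intro y x hx
    rw [memf x hx, hT1 y, hT1 (L.mul f y)]
  · intro y x hx
    rw [memf x hx]
    exact (hT1 y).symm
end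

section
/- If a weak inverse property loop G satisfies the T condition with respect to an f,g-principal isotope G', then (a) f^{ρ'} = g^{λ'} in G', and (b) g·g = f·f = e', where e' = f·g is the identity element of G'. -/
/-- If a WIPL `G` satisfies the `𝒯` condition with respect to an
`f,g`-principal isotope `G'`, then (a) `f^{ρ'} = g^{λ'}` in `G'`, and
(b) `g·g = f·f = e'`, where `e' = f·g` is the identity of `G'`. -/
theorem stmt_12 {G : Type*} (L : LoopStr G) (f g : G)
    (circ : G → G → G)
    (hpi : ∀ x y, circ (L.mul x g) (L.mul f y) = L.mul x y)
    (ρ lam ρ' lam' : G → G)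
    (hρ : ∀ x, L.mul x (ρ x) = L.one)
    (hlam : ∀ x, L.mul (lam x) x = L.one)
    (hρ' : ∀ x, circ x (ρ' x) = L.mul f g)
    (hlam' : ∀ x, circ (lam' x) x = L.mul f g)
    (hG : L.WIP)
    (hT1 : ∀ x, L.mul x g = L.mul f x)
    (hT23 : ((∀ x, ρ' x = L.mul f (ρ x)) ∧ (∀ x, ρ' (L.mul x g) = ρ x)) ∨
            ((∀ x, lam' x = L.mul (lam x) g) ∧ (∀ x, lam' (L.mul f x) = lam x))) :
    ρ' f = lam' g ∧ L.mul g g = L.mul f g ∧ L.mul f f = L.mul f g := by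
  -- left cancellation
  have lcancel : ∀ a x y, L.mul a x = L.mul a y → x = y := fun a x y h =>
    (L.left_bij a).1 h
  -- T1 at the identity gives f = g
  have hfg : f = g := by
    have h := hT1 L.one
    rw [L.one_mul, L.mul_one] at h
    exact h.symm
  subst hfg
  refine ⟨?_, (hT1 f).symm ▸ rfl, hT1 f⟩
  -- WIP converse: x·(y·z) = 1 → (x·y)·z = 1
  have wipc : ∀ x y z, L.mul x (L.mul y z) = L.one →
      L.mul (L.mul x y) z = L.one := by
    intro x y z h
    have h1 : L.mul (L.mul x y) (ρ (L.mul x y)) = L.one := hρ _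
    have h2 : L.mul x (L.mul y (ρ (L.mul x y))) = L.one := hG _ _ _ h1
    have h3 : L.mul y (ρ (L.mul x y)) = L.mul y z :=
      lcancel x _ _ (h2.trans h.symm)
    have h4 : ρ (L.mul x y) = z := lcancel y _ _ h3
    rw [← h4]; exact h1
  have hρ1 : ρ L.one = L.one := by
    have := hρ L.one; rwa [L.one_mul] at this
  have hlam1 : lam L.one = L.one := by
    have := hlam L.one; rwa [L.mul_one] at this
  rcases hT23 with ⟨h2a, h2b⟩ | ⟨h3a, h3b⟩
  · -- T2 case
    have hρ'f : ρ' f = L.one := by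
      have := h2b L.one
      rwa [L.one_mul, hρ1] at this
    -- ρ f = f·f
    obtain ⟨y, hy⟩ := (L.left_bij f).2 (ρ f)
    simp only at hy
    have key : ρ f = L.mul f f := by
      have h1 : circ (L.mul f f) (ρ' (L.mul f f)) = L.mul f f := hρ' _
      rw [h2b f, ← hy, hpi] at h1
      rw [← hy]; exact h1
    -- so f·(f·f) = 1, hence (f·f)·f = 1
    have h1 : L.mul (L.mul f f) f = L.one := wipc f f f (key ▸ hρ f)
    -- lam' f = (f·f)·f
    obtain ⟨x, hx⟩ := (L.right_bij f).2 (lam' f)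
    simp only at hx
    have h2 : circ (lam' f) f = L.mul f f := hlam' f
    have h3 : circ (L.mul x f) (L.mul f L.one) = L.mul x L.one := hpi x L.one
    rw [L.mul_one, L.mul_one, hx] at h3
    rw [hρ'f, ← hx, h3.symm.trans h2, h1]
  · -- T3 case
    have hlam'f : lam' f = L.one := by
      have := h3b L.one
      rwa [L.mul_one, hlam1] at this
    -- lam f = f·f
    obtain ⟨x, hx⟩ := (L.right_bij f).2 (lam f)
    simp only at hx
    have key : lam f = L.mul f f := by
      have h1 : circ (lam' (L.mul f f)) (L.mul f f) = L.mul f f := hlam' _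
      rw [h3b f, ← hx, hpi] at h1
      rw [← hx]; exact h1
    have h1 : L.mul f (L.mul f f) = L.one := hG f f f (key ▸ hlam f)
    -- ρ' f = f·(f·f)
    obtain ⟨y, hy⟩ := (L.left_bij f).2 (ρ' f)
    simp only at hy
    have h2 : circ f (ρ' f) = L.mul f f := hρ' f
    have h3 : circ (L.mul L.one f) (L.mul f y) = L.mul L.one y := hpi L.one y
    rw [L.one_mul, L.one_mul, hy] at h3
    rw [hlam'f, ← hy, h3.symm.trans h2, h1]
end

section
/- A loop with the left inverse property is a weak inverse property loop if and only if it has the right inverse property; dually, a loop with the right inverse property is a weak inverse property loop if and only if it has the left inverse property. -/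
/-- A loop with the left inverse property (`x^λ·(x·y) = y`) is a WIPL
iff it has the right inverse property (`(x·y)·y^ρ = x`); dually, a loop with the right
inverse property is a WIPL iff it has the left inverse property. -/
theorem stmt_14 {G : Type*} (L : LoopStr G)
    (ρ lam : G → G)
    (hρ : ∀ x, L.mul x (ρ x) = L.one)
    (hlam : ∀ x, L.mul (lam x) x = L.one) :
    ((∀ x y, L.mul (lam x) (L.mul x y) = y) →
      (L.WIP ↔ (∀ x y, L.mul (L.mul x y) (ρ y) = x))) ∧
    ((∀ x y, L.mul (L.mul x y) (ρ y) = x) →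
      (L.WIP ↔ (∀ x y, L.mul (lam x) (L.mul x y) = y))) := by
  have lcancel : ∀ a : G, ∀ {x y : G}, L.mul a x = L.mul a y → x = y :=
    fun a _ _ h => (L.left_bij a).1 h
  have rcancel : ∀ a : G, ∀ {x y : G}, L.mul x a = L.mul y a → x = y :=
    fun a _ _ h => (L.right_bij a).1 h
  have rho_lam : ∀ x, ρ (lam x) = x :=
    fun x => lcancel (lam x) ((hρ (lam x)).trans (hlam x).symm)
  have lam_rho : ∀ x, lam (ρ x) = x :=
    fun x => rcancel (ρ x) ((hlam (ρ x)).trans (hρ x).symm)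
  -- WIP in the form y·ρ(x·y) = ρ x
  have A : L.WIP → ∀ x y, L.mul y (ρ (L.mul x y)) = ρ x := by
    intro hW x y
    exact lcancel x ((hW x y _ (hρ _)).trans (hρ x).symm)
  -- WIP in the form λ(y·t)·y = λ t
  have B : L.WIP → ∀ y t, L.mul (lam (L.mul y t)) y = lam t := by
    intro hW y t
    have h1 : ρ (lam (L.mul y t)) = L.mul y t :=
      lcancel (lam (L.mul y t)) ((hρ _).trans (hlam (L.mul y t)).symm)
    have h2 := A hW (lam (L.mul y t)) y
    rw [h1] at h2
    have h3 : ρ (L.mul (lam (L.mul y t)) y) = t := lcancel y h2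
    have := congrArg lam h3
    rwa [lam_rho] at this
  -- LIP together with RIP imply WIP
  have wip_of : (∀ x y, L.mul (lam x) (L.mul x y) = y) →
      (∀ x y, L.mul (L.mul x y) (ρ y) = x) → L.WIP := by
    intro hL hR
    have lam_eq : ∀ x, lam x = ρ x := by
      intro x
      have := hL x (ρ x)
      rwa [hρ, L.mul_one] at this
    intro x y z h
    have hz : z = ρ (L.mul x y) := lcancel (L.mul x y) (h.trans (hρ _).symm)
    subst hz
    have h1 := hL x y
    have h2 := hR (lam x) (L.mul x y)
    rw [h1] at h2
    rw [h2, lam_eq, hρ]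
  constructor
  · intro hL
    constructor
    · intro hW a z
      have hA := A hW (lam a) (L.mul a z)
      rw [hL a z, rho_lam] at hA
      exact hA
    · exact wip_of hL
  · intro hR
    constructor
    · intro hW a z
      have hB := B hW (L.mul a z) (ρ z)
      rw [hR a z, lam_rho] at hB
      exact hB
    · exact fun hL => wip_of hL hR
end

section
/- Let G be a cross inverse property loop, A : G → H a loop isomorphism, and set C = J_λA and D = J_ρA. Then D = J_ρ²C and C = J_λ²D. If in addition G has the right inverse property or the left inverse property, then C = D and consequently J_ρ = J_λ, i.e. x^ρ = x^λ for all x ∈ G. -/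
/-- Let `G` be a CIP loop, `A : G → H` a loop isomorphism, and set
`C = JλA`, `D = JρA`. Then `D = Jρ²C` (pointwise `(x^ρ)A = (((x^ρ)^ρ)^λ)A`) and
`C = Jλ²D` (pointwise `(x^λ)A = (((x^λ)^λ)^ρ)A`). If in addition `G` has the right or
left inverse property, then `C = D` and consequently `Jρ = Jλ`, i.e. `x^ρ = x^λ` for
all `x ∈ G`. -/
theorem stmt_18 {G H : Type*} (L : LoopStr G) (M : LoopStr H)
    (ρ lam : G → G) (ρ' lam' : H → H)
    (hρ : ∀ x, L.mul x (ρ x) = L.one)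
    (hlam : ∀ x, L.mul (lam x) x = L.one)
    (hρ' : ∀ x, M.mul x (ρ' x) = M.one)
    (hlam' : ∀ x, M.mul (lam' x) x = M.one)
    (hCIP : ∀ x y, L.mul (L.mul x y) (ρ x) = y)
    (A : G ≃ H)
    (hiso : ∀ x y, M.mul (A x) (A y) = A (L.mul x y)) :
    (∀ x, A (ρ x) = A (lam (ρ (ρ x)))) ∧
    (∀ x, A (lam x) = A (ρ (lam (lam x)))) ∧
    (((∀ x y, L.mul (L.mul x y) (ρ y) = x) ∨ (∀ x y, L.mul (lam x) (L.mul x y) = y)) →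
      (∀ x, A (lam x) = A (ρ x)) ∧ (∀ x, ρ x = lam x)) := by
  refine ⟨fun x => ?_, fun x => ?_, fun h => ?_⟩
  · congr 1
    exact (L.right_bij (ρ (ρ x))).1 (((hρ (ρ x)).trans (hlam (ρ (ρ x))).symm : _))
  · congr 1
    exact (L.left_bij (lam (lam x))).1 (((hlam (lam x)).trans (hρ (lam (lam x))).symm : _))
  · have key : ∀ x, ρ x = lam x := by
      intro x
      rcases h with hRIP | hLIP
      · have := hRIP (lam x) x
        rw [hlam, L.one_mul] at this
        exact this
      · have := hLIP x (ρ x)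
        rw [hρ, L.mul_one] at this
        exact this.symm
    exact ⟨fun x => by rw [key x], key⟩
end

section
/- For a bijection α of a loop L, α is a weak right inverse permutation (i.e. x^ρ = ((xα)^ρ)α for all x ∈ L) if and only if α is a weak left inverse permutation (i.e. x^λ = ((xα)^λ)α for all x ∈ L); hence the sets S_ρ(L), S_λ(L) and S'(L) of weak right, weak left and weak inverse permutations of L coincide. -/
/-- For a bijection `α` of a loop `L`, `α` is a weak right inverse
permutation (`x^ρ = ((xα)^ρ)α` for all `x`) iff `α` is a weak left inverse permutation
(`x^λ = ((xα)^λ)α` for all `x`); hence the sets `Sρ(L)`, `Sλ(L)` and `S'(L)` of weak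
right, weak left and weak inverse permutations coincide. -/
theorem stmt_19 {G : Type*} (L : LoopStr G)
    (ρ lam : G → G)
    (hρ : ∀ x, L.mul x (ρ x) = L.one)
    (hlam : ∀ x, L.mul (lam x) x = L.one)
    (α : Equiv.Perm G) :
    (∀ x, ρ x = α (ρ (α x))) ↔ (∀ x, lam x = α (lam (α x))) := by
  -- key inverse relations
  have hlr : ∀ x, lam (ρ x) = x := fun x =>
    (L.right_bij (ρ x)).1 (by simp only []; rw [hlam (ρ x), hρ x])
  have hrl : ∀ x, ρ (lam x) = x := fun x =>
    (L.left_bij (lam x)).1 (by simp only []; rw [hρ (lam x), hlam x])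
  have hρinj : Function.Injective ρ := Function.LeftInverse.injective hlr
  have hlaminj : Function.Injective lam := Function.LeftInverse.injective hrl
  constructor
  · intro h x
    -- from h: ρ y = α⁻¹ (ρ (α⁻¹ y))
    have hA : ∀ y, ρ y = α.symm (ρ (α.symm y)) := by
      intro y
      have := h (α.symm y)
      rw [Equiv.apply_symm_apply] at this
      rw [this, Equiv.symm_apply_apply]
    apply hρinj
    rw [hrl, hA (α (lam (α x))), Equiv.symm_apply_apply, hrl, Equiv.symm_apply_apply]
  · intro h x
    have hA : ∀ y, lam y = α.symm (lam (α.symm y)) := by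
      intro y
      have := h (α.symm y)
      rw [Equiv.apply_symm_apply] at this
      rw [this, Equiv.symm_apply_apply]
    apply hlaminj
    rw [hlr, hA (α (ρ (α x))), Equiv.symm_apply_apply, hlr, Equiv.symm_apply_apply]
end
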